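/- For a BMS channel W and symbols y_i, y_j with LR(y_i), LR(y_j) ≥ 1, the degrading merge of y_i with y_j yields capacity at least as large as the merge of y_i with the conjugate ȳ_j: I(y_i, y_j) ≥ I(y_i, ȳ_j). -/

import Mathlib

open scoped BigOperators

/-- `P : A → B → ℝ` is a channel: nonnegative entries, rows sum to 1. -/
def IsChannel {A B : Type*} [Fintype B] (P : A → B → ℝ) : Prop :=
  (∀ a b, 0 ≤ P a b) ∧ ∀ a, ∑ b, P a b = 1

/-- Symmetric capacity of a binary-input channel. -/
noncomputable def Icap {Z : Type*} [Fintype Z] (Q : Bool → Z → ℝ) : ℝ :=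
  ∑ z, ∑ x : Bool,
    (1 / 2) * Q x z * Real.logb 2 (Q x z / ((Q false z + Q true z) / 2))

/-- The degrading merge of symbols `w₁` and `w₂` (and their conjugates) of `W`. -/
noncomputable def mergeCh {Y : Type*} [DecidableEq Y]
    (W : Bool → Y → ℝ) (c : Y → Y) (w₁ w₂ : Y) : Bool → (Y ⊕ Bool) → ℝ :=
  fun x s =>
    Sum.elim
      (fun y => if y = w₁ ∨ y = c w₁ ∨ y = w₂ ∨ y = c w₂ then 0 else W x y)
      (fun b : Bool => if b then W x (c w₁) + W x (c w₂) else W x w₁ + W x w₂) s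

/-!
Merging `yᵢ` with `yⱼ` or with `ȳⱼ` leaves the unmerged outputs untouched and produces a
conjugate pair whose probabilities `p, s - p` under input `0` have the same total `s` in both
cases. The pair contributes `φ p + φ (s - p)` to the capacity, with `φ x = x log₂ (x / (s / 2))`
convex, so the contribution grows as `p` moves away from `s / 2`; when LR(yᵢ), LR(yⱼ) ≥ 1 the
split `W(yᵢ) + W(yⱼ)` versus `W(ȳᵢ) + W(ȳⱼ)` is the most extreme of the two.
-/

open Real Set

theorem ConvexOn.map_add_sub_le {f : ℝ → ℝ} {s : Set ℝ} (hf : ConvexOn ℝ s f) {a b x : ℝ}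
    (ha : a ∈ s) (hb : b ∈ s) (hax : a ≤ x) (hxb : x ≤ b) :
    f x + f (a + b - x) ≤ f a + f b := by
  obtain ⟨p, q, hp, hq, hpq, rfl⟩ : x ∈ segment ℝ a b := by
    rw [segment_eq_Icc (hax.trans hxb)]; exact ⟨hax, hxb⟩
  have hswap : a + b - (p • a + q • b) = q • a + p • b := by
    simp only [smul_eq_mul]; linear_combination (a + b) * hpq.symm
  rw [hswap]
  calc f (p • a + q • b) + f (q • a + p • b)
      ≤ (p • f a + q • f b) + (q • f a + p • f b) :=
        add_le_add (hf.2 ha hb hp hq hpq) (hf.2 ha hb hq hp (by linarith))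
    _ = f a + f b := by simp only [smul_eq_mul]; linear_combination (f a + f b) * hpq

theorem Real.convexOn_mul_logb_div {b : ℝ} (hb : 1 < b) (m : ℝ) :
    ConvexOn ℝ (Ici 0) fun x => x * logb b (x / m) := by
  rcases eq_or_ne m 0 with rfl | hm
  · simpa using convexOn_const (0 : ℝ) (convex_Ici (0 : ℝ))
  have hsplit : (fun x => x * logb b (x / m)) =
      fun x => (log b)⁻¹ • (x * log x) + (-(log m / log b)) • x := by
    funext x
    rcases eq_or_ne x 0 with rfl | hx
    · simp
    · simp only [logb, log_div hx hm, smul_eq_mul]; ring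
  rw [hsplit]
  exact (convexOn_mul_log.smul (inv_nonneg.2 (log_nonneg hb.le))).add
    ((LinearMap.lsmul ℝ ℝ (-(log m / log b))).convexOn (convex_Ici 0))

theorem Icap_sum_type {A B : Type*} [Fintype A] [Fintype B] (Q : Bool → A ⊕ B → ℝ) :
    Icap Q = Icap (fun x a => Q x (.inl a)) + Icap (fun x b => Q x (.inr b)) :=
  Fintype.sum_sum_type _

theorem Icap_ite_eq (u v : ℝ) :
    Icap (fun x b : Bool => if x = b then u else v) =
      u * logb 2 (u / ((u + v) / 2)) + v * logb 2 (v / ((u + v) / 2)) := by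
  simp only [Icap, Fintype.sum_bool, if_true, Bool.false_eq_true, Bool.true_eq_false, if_false,
    add_comm v u]
  ring

section Merge

variable {Y : Type*} [DecidableEq Y] {W : Bool → Y → ℝ} {c : Y → Y}

theorem mergeCh_inl_conj (hc : Function.Involutive c) (w₁ w₂ : Y) :
    (fun x y => mergeCh W c w₁ (c w₂) x (.inl y)) = fun x y => mergeCh W c w₁ w₂ x (.inl y) := by
  funext x y
  simp only [mergeCh, Sum.elim_inl, hc w₂]
  congr 1
  exact propext (by tauto)

theorem mergeCh_inr_eq (hc : Function.Involutive c) (hsym : ∀ y, W true y = W false (c y))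
    (w₁ w₂ : Y) :
    (fun x b => mergeCh W c w₁ w₂ x (.inr b)) = fun x b =>
      if x = b then W false w₁ + W false w₂ else W false (c w₁) + W false (c w₂) := by
  funext x b
  cases x <;> cases b <;> simp [mergeCh, hsym, hc _]

end Merge

theorem merge_with_symbol_beats_conjugate_general {Y : Type*} [Fintype Y] [DecidableEq Y]
    (W : Bool → Y → ℝ) (hW : IsChannel W)
    (c : Y → Y) (hc : Function.Involutive c)
    (hsym : ∀ y, W true y = W false (c y))
    (yi yj : Y)
    (hLRi : W false (c yi) ≤ W false yi)
    (hLRj : W false (c yj) ≤ W false yj) :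
    Icap (mergeCh W c yi yj) ≥ Icap (mergeCh W c yi (c yj)) := by
  rw [ge_iff_le, Icap_sum_type, Icap_sum_type, mergeCh_inl_conj hc, mergeCh_inr_eq hc hsym,
    mergeCh_inr_eq hc hsym, Icap_ite_eq, Icap_ite_eq, hc yj]
  set a := W false yi
  set a' := W false (c yi)
  set b := W false yj
  set b' := W false (c yj)
  have hconv := (convexOn_mul_logb_div one_lt_two ((a + b + (a' + b')) / 2)).map_add_sub_le
    (a := a' + b') (b := a + b) (x := a + b') (add_nonneg (hW.1 _ _) (hW.1 _ _))
    (add_nonneg (hW.1 _ _) (hW.1 _ _)) (by linarith) (by linarith)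
  rw [show a' + b' + (a + b) - (a + b') = a' + b by ring] at hconv
  rw [show a + b' + (a' + b) = a + b + (a' + b') by ring]
  linarith

/-- merging `yᵢ` with `yⱼ` (both of LR ≥ 1) is at least as good
in capacity as merging `yᵢ` with the conjugate `ȳⱼ`. -/
theorem merge_with_symbol_beats_conjugate {Y : Type*} [Fintype Y] [DecidableEq Y]
    (W : Bool → Y → ℝ) (hW : IsChannel W)
    (c : Y → Y) (hc : Function.Involutive c) (hnofix : ∀ y, c y ≠ y)
    (hsym : ∀ y, W true y = W false (c y))
    (yi yj : Y) (hdist : [yi, c yi, yj, c yj].Nodup)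
    (hLRi : W false (c yi) ≤ W false yi)
    (hLRj : W false (c yj) ≤ W false yj) :
    Icap (mergeCh W c yi yj) ≥ Icap (mergeCh W c yi (c yj)) :=
  merge_with_symbol_beats_conjugate_general W hW c hc hsym yi yj hLRi hLRj
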